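/- arXiv:0706.1484 — 2 statements merged into one kernel-verified Lean document; each statement's English description precedes it below -/
import Mathlib

section
/- For closed subspaces M, N of a Hilbert space, c[M,N] = c[M^⊥, N^⊥], where c is the cosine of the Friedrichs angle. -/
/-!
Since `Kᗮᗮ = K` for closed `K`, it suffices to show `c[Mᗮ, Nᗮ] ≤ c := c[M, N]`.
For `x ∈ M ⊖ N` and `y ∈ N ⊖ M` the definition of `c` gives the sine inequality
`(1 - c²)‖y‖² ≤ ‖x + y‖²`, and splitting off the `M ⊓ N`-components extends it to every
`m + n ∈ M ⊔ N`, with `y ∈ N ⊖ M` the part of `n` orthogonal to `M ⊓ N`. For `u ∈ Mᗮ` with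
projection `a` onto `N` one has `⟪u, m + n⟫ = ⟪a, y⟫`, so
`(1 - c²)|⟪u, w⟫|² ≤ ‖a‖²‖w‖²` on `M ⊔ N`. A vector `u ∈ Mᗮ ⊖ Nᗮ` lies in the closure of
`M ⊔ N`, and taking `w = u` gives `‖u - a‖ ≤ c‖u‖`; as `Nᗮ` only sees `u - a`, this bounds
`|⟪u, v⟫|` by `c‖u‖‖v‖` for `v ∈ Nᗮ`.
-/

noncomputable section

open scoped InnerProductSpace ENNReal

variable {H K : Type*} [NormedAddCommGroup H] [InnerProductSpace ℂ H] [CompleteSpace H]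
  [NormedAddCommGroup K] [InnerProductSpace ℂ K] [CompleteSpace K]

/-- Orthogonal projection onto (the closure of) a subspace, as an operator `H →L[ℂ] H`. -/
def sproj (M : Submodule ℂ H) : H →L[ℂ] H :=
  M.topologicalClosure.subtypeL ∘L M.topologicalClosure.orthogonalProjectionOnto

/-- The reduced minimum modulus of a bounded operator. -/
def gammaRMM (T : H →L[ℂ] K) : ℝ :=
  sInf ((fun x => ‖T x‖) '' {x : H | x ∈ (LinearMap.ker (T : H →ₗ[ℂ] K))ᗮ ∧ ‖x‖ = 1})

/-- `M ⊖ N`. -/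
def ominus (M N : Submodule ℂ H) : Submodule ℂ H := M ⊓ (M ⊓ N)ᗮ

open Classical in
/-- The cosine of the Friedrichs angle between two subspaces. -/
def angleCos (M N : Submodule ℂ H) : ℝ :=
  if M ≤ N ∨ N ≤ M then 0
  else sSup {r : ℝ | ∃ x ∈ ominus M N, ∃ y ∈ ominus N M,
    ‖x‖ = 1 ∧ ‖y‖ = 1 ∧ r = ‖(inner ℂ x y : ℂ)‖}

/-- The sine of the Friedrichs angle. -/
def angleSin (M N : Submodule ℂ H) : ℝ := Real.sqrt (1 - angleCos M N ^ 2)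

variable {I : Type*}

/-- `(w i, W i)` is a fusion frame (frame of subspaces) with bounds `A`, `B`. -/
def IsFusionFrameWith (w : I → ℝ) (W : I → Submodule ℂ H) (A B : ℝ) : Prop :=
  0 < A ∧ 0 < B ∧ (∀ i, IsClosed (W i : Set H)) ∧
    ∀ f : H, A * ‖f‖ ^ 2 ≤ ∑' i, w i ^ 2 * ‖sproj (W i) f‖ ^ 2 ∧
      ∑' i, w i ^ 2 * ‖sproj (W i) f‖ ^ 2 ≤ B * ‖f‖ ^ 2

/-- `(w i, W i)` is a fusion frame for some bounds. -/
def IsFusionFrame (w : I → ℝ) (W : I → Submodule ℂ H) : Prop :=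
  ∃ A B : ℝ, IsFusionFrameWith w W A B

/-- a family of mutually orthogonal closed subspaces with dense span. -/
def IsOBS (E : I → Submodule ℂ H) : Prop :=
  (∀ i, IsClosed (E i : Set H)) ∧
  (∀ i j, i ≠ j → ∀ x ∈ E i, ∀ y ∈ E j, (inner ℂ x y : ℂ) = 0) ∧
  (⨆ i, E i).topologicalClosure = ⊤

/-- A minimal sequence of subspaces. -/
def IsMinimal (W : I → Submodule ℂ H) : Prop :=
  ∀ i, W i ⊓ (⨆ j ∈ {j : I | j ≠ i}, W j).topologicalClosure = ⊥

/-- The kernel of the synthesis operator of `(w i, W i)`, as a subspace of `⊕₂ W i`. -/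
def synthesisKernel (w : I → ℝ) (W : I → Submodule ℂ H) :
    Submodule ℂ (lp (fun i => W i) 2) where
  carrier := {g | ∀ f : H, HasSum (fun i => (w i : ℂ) * (inner ℂ ((g i : H)) f : ℂ)) 0}
  zero_mem' := by
    intro f
    have : (fun i => (w i : ℂ) * (inner ℂ (((0 : lp (fun i => W i) 2) i : H)) f : ℂ)) =
        fun _ => 0 := by
      funext i; simp [lp.coeFn_zero]
    rw [this]; exact hasSum_zero
  add_mem' := by
    intro a b ha hb f
    have h := (ha f).add (hb f)
    rw [add_zero] at h
    have he : (fun i => (w i : ℂ) * (inner ℂ (((a + b) i : H)) f : ℂ)) =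
        fun i => (w i : ℂ) * (inner ℂ ((a i : H)) f : ℂ) +
          (w i : ℂ) * (inner ℂ ((b i : H)) f : ℂ) := by
      funext i
      have h2 : ((a + b) i : ↥(W i)) = a i + b i := by rw [lp.coeFn_add]; rfl
      rw [h2, Submodule.coe_add, inner_add_left]; ring
    rw [he]; exact h
  smul_mem' := by
    intro c a ha f
    have h := (ha f).mul_left (starRingEnd ℂ c)
    rw [mul_zero] at h
    have he : (fun i => (w i : ℂ) * (inner ℂ (((c • a) i : H)) f : ℂ)) =
        fun i => (starRingEnd ℂ c) * ((w i : ℂ) * (inner ℂ ((a i : H)) f : ℂ)) := by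
      funext i
      have h2 : ((c • a) i : ↥(W i)) = c • a i := by rw [lp.coeFn_smul]; rfl
      rw [h2, Submodule.coe_smul, inner_smul_left]; ring
    rw [he]; exact h

/-- The excess of a fusion frame. -/
def fusionExcess (w : I → ℝ) (W : I → Submodule ℂ H) : Cardinal :=
  Module.rank ℂ (synthesisKernel w W)

section FriedrichsAngle

variable {E : Type*} [NormedAddCommGroup E] [InnerProductSpace ℂ E] {M N : Submodule ℂ E}

lemma ominus_eq_bot_of_le (h : M ≤ N) : ominus M N = ⊥ := by
  rw [ominus, inf_eq_left.mpr h, Submodule.inf_orthogonal_eq_bot]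

lemma angleCos_le_of_forall_norm_inner_le {c : ℝ} (hc : 0 ≤ c)
    (h : ∀ x ∈ ominus M N, ∀ y ∈ ominus N M, ‖x‖ = 1 → ‖y‖ = 1 → ‖⟪x, y⟫_ℂ‖ ≤ c) :
    angleCos M N ≤ c := by
  unfold angleCos
  split_ifs
  · exact hc
  · exact Real.sSup_le (by rintro _ ⟨x, hx, y, hy, hx1, hy1, rfl⟩; exact h x hx y hy hx1 hy1) hc

lemma angleCos_le_one (M N : Submodule ℂ E) : angleCos M N ≤ 1 :=
  angleCos_le_of_forall_norm_inner_le zero_le_one fun x _ y _ hx hy =>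
    (norm_inner_le_norm x y).trans_eq (by rw [hx, hy, one_mul])

lemma angleCos_nonneg (M N : Submodule ℂ E) : 0 ≤ angleCos M N := by
  unfold angleCos
  split_ifs
  · exact le_rfl
  · exact Real.sSup_nonneg (by rintro _ ⟨x, -, y, -, -, -, rfl⟩; exact norm_nonneg _)

lemma norm_inner_le_angleCos {x y : E} (hx : x ∈ ominus M N) (hy : y ∈ ominus N M)
    (hx1 : ‖x‖ = 1) (hy1 : ‖y‖ = 1) : ‖⟪x, y⟫_ℂ‖ ≤ angleCos M N := by
  unfold angleCos
  split_ifs with hd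
  · rcases hd with h | h
    · rw [ominus_eq_bot_of_le h, Submodule.mem_bot] at hx
      simp [hx] at hx1
    · rw [ominus_eq_bot_of_le h, Submodule.mem_bot] at hy
      simp [hy] at hy1
  · refine le_csSup ⟨1, ?_⟩ ⟨x, hx, y, hy, hx1, hy1, rfl⟩
    rintro _ ⟨x, -, y, -, hx1, hy1, rfl⟩
    exact (norm_inner_le_norm x y).trans_eq (by rw [hx1, hy1, one_mul])

lemma norm_inner_le_angleCos_mul {x y : E} (hx : x ∈ ominus M N) (hy : y ∈ ominus N M) :
    ‖⟪x, y⟫_ℂ‖ ≤ angleCos M N * (‖x‖ * ‖y‖) := by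
  rcases eq_or_ne x 0 with rfl | hx0
  · simp
  rcases eq_or_ne y 0 with rfl | hy0
  · simp
  have h := norm_inner_le_angleCos (Submodule.smul_mem _ (‖x‖⁻¹ : ℂ) hx)
    (Submodule.smul_mem _ (‖y‖⁻¹ : ℂ) hy) (norm_smul_inv_norm hx0) (norm_smul_inv_norm hy0)
  rw [inner_smul_left, inner_smul_right, norm_mul, norm_mul] at h
  simp only [RCLike.norm_conj, norm_inv, Complex.norm_real, norm_norm] at h
  calc ‖⟪x, y⟫_ℂ‖ = ‖x‖⁻¹ * (‖y‖⁻¹ * ‖⟪x, y⟫_ℂ‖) * (‖x‖ * ‖y‖) := by field_simp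
    _ ≤ angleCos M N * (‖x‖ * ‖y‖) := by gcongr

lemma one_sub_angleCos_sq_mul_norm_sq_le {x y : E} (hx : x ∈ ominus M N)
    (hy : y ∈ ominus N M) : (1 - angleCos M N ^ 2) * ‖y‖ ^ 2 ≤ ‖x + y‖ ^ 2 := by
  have hre : -(angleCos M N * (‖x‖ * ‖y‖)) ≤ RCLike.re ⟪x, y⟫_ℂ :=
    neg_le_of_abs_le ((RCLike.abs_re_le_norm _).trans (norm_inner_le_angleCos_mul hx hy))
  rw [norm_add_sq (𝕜 := ℂ)]
  nlinarith [sq_nonneg (‖x‖ - angleCos M N * ‖y‖)]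

lemma exists_mem_ominus_sub_mem_inf_and_sq_le [(M ⊓ N).HasOrthogonalProjection] {m n : E}
    (hm : m ∈ M) (hn : n ∈ N) : ∃ y ∈ ominus N M, n - y ∈ M ⊓ N ∧
      (1 - angleCos M N ^ 2) * ‖y‖ ^ 2 ≤ ‖m + n‖ ^ 2 := by
  obtain ⟨p, hp, x, hx, rfl⟩ := (M ⊓ N).exists_add_mem_mem_orthogonal m
  obtain ⟨q, hq, y, hy, rfl⟩ := (M ⊓ N).exists_add_mem_mem_orthogonal n
  have hxM : x ∈ M := by simpa using M.sub_mem hm hp.1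
  have hyN : y ∈ N := by simpa using N.sub_mem hn hq.2
  have hyo : y ∈ ominus N M := ⟨hyN, inf_comm M N ▸ hy⟩
  have hpy : ⟪p + q, x + y⟫_ℂ = 0 :=
    (M ⊓ N).inner_right_of_mem_orthogonal ((M ⊓ N).add_mem hp hq) ((M ⊓ N)ᗮ.add_mem hx hy)
  have hsplit : p + x + (q + y) = (p + q) + (x + y) := by abel
  refine ⟨y, hyo, by simpa using hq, ?_⟩
  rw [hsplit]
  nlinarith [norm_add_sq_eq_norm_sq_add_norm_sq_of_inner_eq_zero _ _ hpy,
    one_sub_angleCos_sq_mul_norm_sq_le (M := M) ⟨hxM, hx⟩ hyo, mul_self_nonneg ‖p + q‖]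

lemma one_sub_angleCos_sq_mul_norm_inner_sq_le [(M ⊓ N).HasOrthogonalProjection] {u a w : E}
    (hu : u ∈ Mᗮ) (hua : u - a ∈ Nᗮ) (hw : w ∈ M ⊔ N) :
    (1 - angleCos M N ^ 2) * ‖⟪u, w⟫_ℂ‖ ^ 2 ≤ ‖a‖ ^ 2 * ‖w‖ ^ 2 := by
  obtain ⟨m, hm, n, hn, rfl⟩ := Submodule.mem_sup.mp hw
  obtain ⟨y, hy, hny, hsin⟩ := exists_mem_ominus_sub_mem_inf_and_sq_le hm hn
  have hinner : ⟪u, m + n⟫_ℂ = ⟪a, y⟫_ℂ := by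
    have hn' : n = (n - y) + y := by abel
    have hu' : u = (u - a) + a := by abel
    rw [inner_add_right, Submodule.inner_left_of_mem_orthogonal hm hu, zero_add, hn',
      inner_add_right, Submodule.inner_left_of_mem_orthogonal hny.1 hu, zero_add, hu',
      inner_add_left, Submodule.inner_left_of_mem_orthogonal hy.1 hua, zero_add]
  have hc : 0 ≤ 1 - angleCos M N ^ 2 := by
    nlinarith [angleCos_nonneg M N, angleCos_le_one M N]
  have hCS : ‖⟪a, y⟫_ℂ‖ ^ 2 ≤ ‖a‖ ^ 2 * ‖y‖ ^ 2 := by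
    rw [← mul_pow]; gcongr; exact norm_inner_le_norm a y
  rw [hinner]
  calc (1 - angleCos M N ^ 2) * ‖⟪a, y⟫_ℂ‖ ^ 2
      ≤ (1 - angleCos M N ^ 2) * (‖a‖ ^ 2 * ‖y‖ ^ 2) := by gcongr
    _ = ‖a‖ ^ 2 * ((1 - angleCos M N ^ 2) * ‖y‖ ^ 2) := by ring
    _ ≤ ‖a‖ ^ 2 * ‖m + n‖ ^ 2 := by gcongr

lemma norm_sub_le_angleCos_mul [(M ⊓ N).HasOrthogonalProjection] {u a : E} (hu : u ∈ Mᗮ)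
    (hu' : u ∈ (M ⊔ N).topologicalClosure) (ha : a ∈ N) (hua : u - a ∈ Nᗮ) :
    ‖u - a‖ ≤ angleCos M N * ‖u‖ := by
  have hclosed :
      IsClosed {w : E | (1 - angleCos M N ^ 2) * ‖⟪u, w⟫_ℂ‖ ^ 2 ≤ ‖a‖ ^ 2 * ‖w‖ ^ 2} :=
    isClosed_le (by fun_prop) (by fun_prop)
  have hu2 : (1 - angleCos M N ^ 2) * ‖⟪u, u⟫_ℂ‖ ^ 2 ≤ ‖a‖ ^ 2 * ‖u‖ ^ 2 :=
    closure_minimal (fun w hw => one_sub_angleCos_sq_mul_norm_inner_sq_le hu hua hw) hclosed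
      (by rwa [← Submodule.topologicalClosure_coe])
  rw [inner_self_eq_norm_sq_to_K, norm_pow, RCLike.norm_ofReal, abs_norm] at hu2
  have hpyth := norm_add_sq_eq_norm_sq_add_norm_sq_of_inner_eq_zero _ _
    (Submodule.inner_right_of_mem_orthogonal ha hua)
  rw [add_sub_cancel] at hpyth
  have hsq : ‖u - a‖ ^ 2 ≤ (angleCos M N * ‖u‖) ^ 2 := by
    rcases (norm_nonneg u).eq_or_lt with hu0 | hu0
    · nlinarith [mul_self_nonneg ‖a‖]
    nlinarith [pow_pos hu0 2]
  exact le_of_sq_le_sq hsq (mul_nonneg (angleCos_nonneg M N) (norm_nonneg u))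

lemma angleCos_orthogonal_le [CompleteSpace E] (hM : IsClosed (M : Set E))
    (hN : IsClosed (N : Set E)) : angleCos Mᗮ Nᗮ ≤ angleCos M N := by
  have : CompleteSpace N := hN.completeSpace_coe
  have : CompleteSpace ↥(M ⊓ N) := (hM.inter hN).completeSpace_coe
  refine angleCos_le_of_forall_norm_inner_le (angleCos_nonneg M N) fun u hu v hv hu1 hv1 => ?_
  obtain ⟨a, ha, b, hb, rfl⟩ := N.exists_add_mem_mem_orthogonal u
  have hclosure : a + b ∈ (M ⊔ N).topologicalClosure := by
    rw [← Submodule.orthogonal_orthogonal_eq_closure, ← Submodule.inf_orthogonal]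
    exact hu.2
  have hb_le := norm_sub_le_angleCos_mul hu.1 hclosure ha (by rwa [add_sub_cancel_left])
  rw [add_sub_cancel_left, hu1, mul_one] at hb_le
  calc ‖⟪a + b, v⟫_ℂ‖ = ‖⟪b, v⟫_ℂ‖ := by
        rw [inner_add_left, Submodule.inner_right_of_mem_orthogonal ha hv.1, zero_add]
    _ ≤ ‖b‖ * ‖v‖ := norm_inner_le_norm b v
    _ ≤ angleCos M N := by rwa [hv1, mul_one]

end FriedrichsAngle

theorem angleCos_orthogonal_orthogonal (M N : Submodule ℂ H)
    (hM : IsClosed (M : Set H)) (hN : IsClosed (N : Set H)) :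
    angleCos M N = angleCos Mᗮ Nᗮ := by
  have : CompleteSpace M := hM.completeSpace_coe
  have : CompleteSpace N := hN.completeSpace_coe
  refine le_antisymm ?_ (angleCos_orthogonal_le hM hN)
  simpa only [Submodule.orthogonal_orthogonal] using
    angleCos_orthogonal_le M.isClosed_orthogonal N.isClosed_orthogonal

end
end

section
/- Every fusion frame (w_i, W_i)_{i∈I} for H with positive excess admits a fusion-frame refinement (w_i, V_i)_{i∈J} (J ⊆ I, {0} ≠ V_i ⊆ W_i) whose excess over the original sequence, namely Σ_{i∈J} dim(W_i ⊖ V_i) + Σ_{i∉J} dim W_i, equals 1. -/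
noncomputable section

open scoped InnerProductSpace ENNReal

variable {H K : Type*} [NormedAddCommGroup H] [InnerProductSpace ℂ H] [CompleteSpace H]
  [NormedAddCommGroup K] [InnerProductSpace ℂ K] [CompleteSpace K]

variable {I : Type*}

/-- The excess of a sequence of subspaces `W` over a refinement `(V i)_{i ∈ Js}`. -/
def refExcess {I : Type*} (W : I → Submodule ℂ H) (Js : Set I) (V : I → Submodule ℂ H) :
    Cardinal :=
  (Cardinal.sum fun i : Js => Module.rank ℂ ((W i.1 ⊓ (V i.1)ᗮ : Submodule ℂ H))) +
    Cardinal.sum fun i : {i : I // i ∉ Js} => Module.rank ℂ (W i.1)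

/-!
A nonzero `g` in the kernel of the synthesis operator has a coordinate `u = g i₀ ≠ 0`; remove the
line `ℂ u` from `W i₀`. The excess of `W` over the new family is `dim (ℂ u) = 1`. Since
`w i₀ ⟪u, f⟫ = -∑_{i ≠ i₀} w i ⟪g i, P_{W i} f⟫`, Cauchy–Schwarz bounds the lost energy
`w i₀² ‖P_{ℂ u} f‖²` by `‖g‖² / ‖u‖²` times the analysis sum of the new family, so the lower frame
bound survives as `A / (1 + ‖g‖² / ‖u‖²)`. Indices whose subspace has become `{0}` are dropped.
-/

theorem Cardinal.sum_eq_lift_of_forall_ne {ι : Type*} (f : ι → Cardinal) (i₀ : ι)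
    (h : ∀ i ≠ i₀, f i = 0) : Cardinal.sum f = Cardinal.lift (f i₀) := by
  obtain ⟨X, rfl⟩ : ∃ X : ι → Type _, f = fun i => Cardinal.mk (X i) :=
    ⟨fun i => (f i).out, funext fun i => (Cardinal.mk_out _).symm⟩
  have hX : ∀ s : Σ i, X i, s.1 = i₀ := fun s => by
    by_contra hs
    exact (Cardinal.mk_eq_zero_iff.mp (h s.1 hs)).false s.2
  rw [← Cardinal.mk_sigma, ← Cardinal.mk_uLift]
  exact Cardinal.mk_congr <|
    (Equiv.subtypeUnivEquiv hX).symm.trans ((Equiv.sigmaSubtype i₀).trans Equiv.ulift.symm)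

theorem norm_sq_le_of_hasSum_of_norm_le_mul {ι E : Type*} [SeminormedAddCommGroup E]
    {x : ι → E} {s : E} {a b : ι → ℝ} (hs : HasSum x s) (ha₀ : ∀ i, 0 ≤ a i)
    (hb₀ : ∀ i, 0 ≤ b i) (ha : Summable fun i => a i ^ 2) (hb : Summable fun i => b i ^ 2)
    (hx : ∀ i, ‖x i‖ ≤ a i * b i) :
    ‖s‖ ^ 2 ≤ (∑' i, a i ^ 2) * ∑' i, b i ^ 2 := by
  obtain ⟨hab, hle⟩ := Real.summable_and_inner_le_Lp_mul_Lq_tsum_of_nonneg .two_two ha₀ hb₀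
    (by simpa only [Real.rpow_two] using ha) (by simpa only [Real.rpow_two] using hb)
  simp only [Real.rpow_two, ← Real.sqrt_eq_rpow] at hle
  have hX : 0 ≤ ∑' i, a i ^ 2 := tsum_nonneg fun i => sq_nonneg _
  have hY : 0 ≤ ∑' i, b i ^ 2 := tsum_nonneg fun i => sq_nonneg _
  calc ‖s‖ ^ 2 ≤ (√(∑' i, a i ^ 2) * √(∑' i, b i ^ 2)) ^ 2 := by
        gcongr
        exact (hs.norm_le_of_bounded hab.hasSum hx).trans hle
    _ = (∑' i, a i ^ 2) * ∑' i, b i ^ 2 := by rw [mul_pow, Real.sq_sqrt hX, Real.sq_sqrt hY]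

theorem Submodule.le_orthogonal_inf_orthogonal {𝕜 E : Type*} [RCLike 𝕜]
    [NormedAddCommGroup E] [InnerProductSpace 𝕜 E] (U W : Submodule 𝕜 E) :
    U ≤ (W ⊓ Uᗮ)ᗮ :=
  U.le_orthogonal_orthogonal.trans (Submodule.orthogonal_le inf_le_right)

theorem Submodule.inf_orthogonal_inf_orthogonal {𝕜 E : Type*} [RCLike 𝕜]
    [NormedAddCommGroup E] [InnerProductSpace 𝕜 E] {U W : Submodule 𝕜 E}
    [U.HasOrthogonalProjection] (hUW : U ≤ W) :
    W ⊓ (W ⊓ Uᗮ)ᗮ = U := by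
  have hUV := Submodule.le_orthogonal_inf_orthogonal U W
  refine le_antisymm (fun x hx => ?_) (le_inf hUW hUV)
  obtain ⟨hxW, hxV⟩ := Submodule.mem_inf.mp hx
  have hPx := U.starProjection_apply_mem x
  have hrest : x - U.starProjection x ∈ (W ⊓ Uᗮ) ⊓ (W ⊓ Uᗮ)ᗮ :=
    Submodule.mem_inf.mpr ⟨Submodule.mem_inf.mpr
      ⟨W.sub_mem hxW (hUW hPx), U.sub_starProjection_mem_orthogonal x⟩,
      Submodule.sub_mem _ hxV (hUV hPx)⟩
  rw [Submodule.inf_orthogonal_eq_bot, Submodule.mem_bot, sub_eq_zero] at hrest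
  exact hrest ▸ hPx

theorem Submodule.norm_starProjection_singleton_mul_norm {𝕜 E : Type*} [RCLike 𝕜]
    [NormedAddCommGroup E] [InnerProductSpace 𝕜 E] (u f : E) :
    ‖(𝕜 ∙ u).starProjection f‖ * ‖u‖ = ‖⟪u, f⟫_𝕜‖ := by
  rcases eq_or_ne u 0 with rfl | hu
  · simp
  rw [Submodule.starProjection_singleton, norm_smul, norm_div, RCLike.norm_ofReal,
    abs_of_nonneg (by positivity : (0 : ℝ) ≤ ‖u‖ ^ 2)]
  field_simp

section Projection

variable {M U W : Submodule ℂ H}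

theorem sproj_eq_starProjection [M.HasOrthogonalProjection] (hM : IsClosed (M : Set H)) :
    sproj M = M.starProjection := by
  change M.topologicalClosure.starProjection = _
  congr 1
  exact hM.submodule_topologicalClosure_eq

@[simp]
theorem sproj_bot : sproj (⊥ : Submodule ℂ H) = 0 := by
  rw [sproj_eq_starProjection (by simp), Submodule.starProjection_bot]

theorem inner_sproj_of_mem {x : H} (hx : x ∈ M) (f : H) : ⟪x, sproj M f⟫_ℂ = ⟪x, f⟫_ℂ := by
  change ⟪x, M.topologicalClosure.starProjection f⟫_ℂ = _
  rw [← Submodule.inner_starProjection_left_eq_right,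
    Submodule.starProjection_eq_self_iff.mpr (M.le_topologicalClosure hx)]

theorem sproj_apply_mem (hM : IsClosed (M : Set H)) (f : H) : sproj M f ∈ M :=
  hM.submodule_topologicalClosure_eq.le (M.topologicalClosure.starProjection_apply_mem f)

theorem sproj_inf_orthogonal [U.HasOrthogonalProjection] (hW : IsClosed (W : Set H))
    (hUW : U ≤ W) (f : H) : sproj (W ⊓ Uᗮ) f = sproj W f - U.starProjection f := by
  have : CompleteSpace W := hW.completeSpace_coe
  have hV : IsClosed ((W ⊓ Uᗮ : Submodule ℂ H) : Set H) :=
    hW.inter (Submodule.isClosed_orthogonal U)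
  have : CompleteSpace ↥(W ⊓ Uᗮ) := hV.completeSpace_coe
  rw [sproj_eq_starProjection hV, sproj_eq_starProjection hW]
  refine Submodule.eq_starProjection_of_mem_orthogonal (Submodule.mem_inf.mpr ⟨?_, ?_⟩) ?_
  · exact W.sub_mem (W.starProjection_apply_mem f) (hUW (U.starProjection_apply_mem f))
  · rw [← sub_sub_sub_cancel_left _ _ f]
    exact Submodule.sub_mem _ (U.sub_starProjection_mem_orthogonal f)
      (Submodule.orthogonal_le hUW (W.sub_starProjection_mem_orthogonal f))
  · rw [sub_sub_eq_add_sub, add_sub_right_comm]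
    exact Submodule.add_mem _
      (Submodule.orthogonal_le inf_le_left (W.sub_starProjection_mem_orthogonal f))
      (Submodule.le_orthogonal_inf_orthogonal U W (U.starProjection_apply_mem f))

theorem norm_sproj_sq_eq_add [U.HasOrthogonalProjection] (hW : IsClosed (W : Set H))
    (hUW : U ≤ W) (f : H) :
    ‖sproj W f‖ ^ 2 = ‖U.starProjection f‖ ^ 2 + ‖sproj (W ⊓ Uᗮ) f‖ ^ 2 := by
  have hV : IsClosed ((W ⊓ Uᗮ : Submodule ℂ H) : Set H) :=
    hW.inter (Submodule.isClosed_orthogonal U)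
  have horth : ⟪U.starProjection f, sproj (W ⊓ Uᗮ) f⟫_ℂ = 0 :=
    Submodule.inner_right_of_mem_orthogonal (U.starProjection_apply_mem f)
      (Submodule.mem_inf.mp (sproj_apply_mem hV f)).2
  have hsum : sproj W f = U.starProjection f + sproj (W ⊓ Uᗮ) f := by
    rw [sproj_inf_orthogonal hW hUW, add_sub_cancel]
  simpa only [sq, hsum] using norm_add_sq_eq_norm_sq_add_norm_sq_of_inner_eq_zero _ _ horth

end Projection

section RemoveLine

variable {𝕜 E : Type*} [RCLike 𝕜] [NormedAddCommGroup E] [InnerProductSpace 𝕜 E]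

open Classical in
def removeLine (W : I → Submodule 𝕜 E) (i₀ : I) (u : E) : I → Submodule 𝕜 E :=
  Function.update W i₀ (W i₀ ⊓ (𝕜 ∙ u)ᗮ)

variable {W : I → Submodule 𝕜 E} {i₀ : I} {u : E}

@[simp]
theorem removeLine_self : removeLine W i₀ u i₀ = W i₀ ⊓ (𝕜 ∙ u)ᗮ := by
  simp [removeLine]

theorem removeLine_of_ne {i : I} (hi : i ≠ i₀) : removeLine W i₀ u i = W i := by
  simp [removeLine, hi]

theorem removeLine_le (i : I) : removeLine W i₀ u i ≤ W i := by
  rcases eq_or_ne i i₀ with rfl | hi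
  · simp
  · rw [removeLine_of_ne hi]

theorem isClosed_removeLine (hW : ∀ i, IsClosed (W i : Set E)) (i : I) :
    IsClosed (removeLine W i₀ u i : Set E) := by
  rcases eq_or_ne i i₀ with rfl | hi
  · simpa using (hW i).inter (Submodule.isClosed_orthogonal _)
  · simpa [removeLine_of_ne hi] using hW i

theorem inf_orthogonal_removeLine_self (hu : u ∈ W i₀) :
    W i₀ ⊓ (removeLine W i₀ u i₀)ᗮ = 𝕜 ∙ u := by
  rw [removeLine_self, Submodule.inf_orthogonal_inf_orthogonal
    ((Submodule.span_singleton_le_iff_mem _ _).mpr hu)]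

theorem inf_orthogonal_removeLine_of_ne {i : I} (hi : i ≠ i₀) :
    W i ⊓ (removeLine W i₀ u i)ᗮ = ⊥ := by
  rw [removeLine_of_ne hi, Submodule.inf_orthogonal_eq_bot]

end RemoveLine

section FusionFrame

variable {w : I → ℝ} {W : I → Submodule ℂ H} {A B : ℝ}

theorem IsFusionFrameWith.summable (hF : IsFusionFrameWith w W A B) (f : H) :
    Summable fun i => w i ^ 2 * ‖sproj (W i) f‖ ^ 2 := by
  by_contra hns
  obtain rfl : f = 0 := by
    by_contra hf
    have hlow := (hF.2.2.2 f).1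
    rw [tsum_eq_zero_of_not_summable hns] at hlow
    have : 0 < A * ‖f‖ ^ 2 := mul_pos hF.1 (pow_pos (norm_pos_iff.mpr hf) 2)
    linarith
  simp at hns

theorem IsFusionFrameWith.subtype {Js : Set I} (hF : IsFusionFrameWith w W A B)
    (hJs : ∀ i ∉ Js, W i = ⊥) :
    IsFusionFrameWith (fun i : Js => w i) (fun i : Js => W i) A B := by
  obtain ⟨hA, hB, hW, hbound⟩ := hF
  have hsum (f : H) : ∑' i : Js, w i ^ 2 * ‖sproj (W i) f‖ ^ 2 =
      ∑' i, w i ^ 2 * ‖sproj (W i) f‖ ^ 2 := by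
    rw [tsum_subtype Js (fun i => w i ^ 2 * ‖sproj (W i) f‖ ^ 2), Set.indicator_eq_self.mpr]
    intro i hi
    by_contra hiJ
    simp [hJs i hiJ] at hi
  exact ⟨hA, hB, fun i => hW i, fun f => hsum f ▸ hbound f⟩

theorem sq_mul_norm_inner_le_of_mem_synthesisKernel {g : lp (fun i => W i) 2}
    (hg : g ∈ synthesisKernel w W) (i₀ : I) (f : H)
    (hs : Summable fun i => w i ^ 2 * ‖sproj (removeLine W i₀ (g i₀) i) f‖ ^ 2) :
    w i₀ ^ 2 * ‖⟪(g i₀ : H), f⟫_ℂ‖ ^ 2 ≤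
      ‖g‖ ^ 2 * ∑' i, w i ^ 2 * ‖sproj (removeLine W i₀ (g i₀) i) f‖ ^ 2 := by
  classical
  set χ : I → ℂ := fun i => (w i : ℂ) * ⟪(g i : H), f⟫_ℂ
  have hrest : HasSum (Function.update χ i₀ 0) (-χ i₀) := by
    simpa using (hg f).update i₀ 0
  have hbound (i : I) :
      ‖Function.update χ i₀ 0 i‖ ≤
        ‖(g i : H)‖ * (|w i| * ‖sproj (removeLine W i₀ (g i₀) i) f‖) := by
    rcases eq_or_ne i i₀ with rfl | hi
    · simp only [Function.update_self, norm_zero]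
      positivity
    · rw [Function.update_of_ne hi, removeLine_of_ne hi]
      dsimp only [χ]
      rw [← inner_sproj_of_mem (g i).2, norm_mul, Complex.norm_real, Real.norm_eq_abs,
        mul_left_comm]
      gcongr
      exact norm_inner_le_norm _ _
  have hg2 : HasSum (fun i => ‖(g i : H)‖ ^ 2) (‖g‖ ^ 2) := by
    simpa [Real.rpow_two] using lp.hasSum_norm (p := 2) (by norm_num) g
  have hsq (i : I) : (|w i| * ‖sproj (removeLine W i₀ (g i₀) i) f‖) ^ 2 =
      w i ^ 2 * ‖sproj (removeLine W i₀ (g i₀) i) f‖ ^ 2 := by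
    rw [mul_pow, sq_abs]
  have hCS := norm_sq_le_of_hasSum_of_norm_le_mul hrest (fun i => norm_nonneg _)
    (fun i => by positivity) hg2.summable (by simpa only [hsq] using hs) hbound
  calc w i₀ ^ 2 * ‖⟪(g i₀ : H), f⟫_ℂ‖ ^ 2 = ‖-χ i₀‖ ^ 2 := by simp [χ, mul_pow]
    _ ≤ _ := by simpa only [hsq, hg2.tsum_eq] using hCS

theorem IsFusionFrameWith.removeLine_of_mem_synthesisKernel (hF : IsFusionFrameWith w W A B)
    {g : lp (fun i => W i) 2} (hg : g ∈ synthesisKernel w W) {i₀ : I} (hu : (g i₀ : H) ≠ 0) :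
    IsFusionFrameWith w (removeLine W i₀ (g i₀)) (A / (1 + ‖g‖ ^ 2 / ‖(g i₀ : H)‖ ^ 2)) B := by
  classical
  set u : H := (g i₀ : H)
  have hK : 0 < 1 + ‖g‖ ^ 2 / ‖u‖ ^ 2 := by positivity
  refine ⟨div_pos hF.1 hK, hF.2.1, isClosed_removeLine hF.2.2.1, fun f => ?_⟩
  set φ : I → ℝ := fun i => w i ^ 2 * ‖sproj (W i) f‖ ^ 2
  set ψ : I → ℝ := fun i => w i ^ 2 * ‖sproj (removeLine W i₀ u i) f‖ ^ 2
  set d := w i₀ ^ 2 * ‖(ℂ ∙ u).starProjection f‖ ^ 2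
  have hsplit (i : I) : φ i = ψ i + (Pi.single i₀ d : I → ℝ) i := by
    dsimp only [φ, ψ]
    rcases eq_or_ne i i₀ with rfl | hi
    · rw [Pi.single_eq_same, removeLine_self, norm_sproj_sq_eq_add (hF.2.2.1 i)
        ((Submodule.span_singleton_le_iff_mem _ _).mpr (g i).2)]
      ring
    · rw [Pi.single_eq_of_ne hi, removeLine_of_ne hi, add_zero]
  have hle (i : I) : ψ i ≤ φ i := by
    rw [hsplit i]
    have hsingle : 0 ≤ (Pi.single i₀ d : I → ℝ) := Pi.single_nonneg.mpr (by positivity)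
    exact le_add_of_nonneg_right (hsingle i)
  have hφ : Summable φ := hF.summable f
  have hψ : Summable ψ := hφ.of_nonneg_of_le (fun i => by positivity) hle
  have htsum : ∑' i, φ i = ∑' i, ψ i + d := by
    rw [tsum_congr hsplit, hψ.tsum_add (hasSum_pi_single i₀ d).summable, tsum_pi_single]
  have hd : d ≤ ‖g‖ ^ 2 / ‖u‖ ^ 2 * ∑' i, ψ i := by
    have hk := sq_mul_norm_inner_le_of_mem_synthesisKernel hg i₀ f hψ
    rw [← Submodule.norm_starProjection_singleton_mul_norm] at hk
    rw [div_mul_eq_mul_div, le_div_iff₀ (by positivity)]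
    linarith
  have hlow : A * ‖f‖ ^ 2 ≤ ∑' i, φ i := (hF.2.2.2 f).1
  constructor
  · rw [div_mul_eq_mul_div, div_le_iff₀ hK]
    linarith
  · exact (hψ.tsum_le_tsum hle hφ).trans (hF.2.2.2 f).2

end FusionFrame

theorem refExcess_eq_lift_of_forall_ne {E : Type*} [NormedAddCommGroup E]
    [InnerProductSpace ℂ E] {W V : I → Submodule ℂ E} {Js : Set I} (hJs : ∀ i ∉ Js, V i = ⊥)
    (i₀ : I) (h : ∀ i ≠ i₀, W i ⊓ (V i)ᗮ = ⊥) :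
    refExcess W Js V = Cardinal.lift (Module.rank ℂ ↥(W i₀ ⊓ (V i₀)ᗮ)) := by
  have hrank : ∀ i ∉ Js, Module.rank ℂ (W i) = Module.rank ℂ ↥(W i ⊓ (V i)ᗮ) :=
    fun i hi => by rw [hJs i hi, Submodule.bot_orthogonal_eq_top, inf_top_eq]
  have hzero : ∀ i ≠ i₀, Module.rank ℂ ↥(W i ⊓ (V i)ᗮ) = 0 := fun i hi => by
    rw [h i hi, rank_bot]
  rw [refExcess]
  by_cases h₀ : i₀ ∈ Js
  · have hout (i : {i // i ∉ Js}) : Module.rank ℂ (W i) = 0 := by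
      rw [hrank i i.2, hzero i fun hi => i.2 (hi ▸ h₀)]
    rw [Cardinal.sum_eq_lift_of_forall_ne (fun i : Js => Module.rank ℂ ↥(W i ⊓ (V i)ᗮ))
      ⟨i₀, h₀⟩ fun i hi => hzero i (Subtype.coe_injective.ne hi)]
    simp [hout]
  · have hin (i : Js) : Module.rank ℂ ↥(W i ⊓ (V i)ᗮ) = 0 :=
      hzero i fun hi => h₀ (hi ▸ i.2)
    rw [Cardinal.sum_eq_lift_of_forall_ne (fun i : {i // i ∉ Js} => Module.rank ℂ (W i))
      ⟨i₀, h₀⟩ fun i hi => (hrank i i.2).trans (hzero i (Subtype.coe_injective.ne hi))]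
    simp [hin, hrank i₀ h₀]

theorem exists_refinement_excess_one_general {I : Type*} (w : I → ℝ) (W : I → Submodule ℂ H)
    (hFS : IsFusionFrame w W) (hex : 0 < fusionExcess w W) :
    ∃ (Js : Set I) (V : I → Submodule ℂ H),
      (∀ i ∈ Js, V i ≤ W i ∧ V i ≠ ⊥ ∧ IsClosed (V i : Set H)) ∧
      IsFusionFrame (fun i : Js => w i.1) (fun i : Js => V i.1) ∧
      refExcess W Js V = 1 := by
  obtain ⟨A, B, hF⟩ := hFS
  obtain ⟨g, hg0⟩ := rank_pos_iff_exists_ne_zero.mp hex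
  obtain ⟨i₀, hi₀⟩ : ∃ i, (g.1 i : H) ≠ 0 := by
    by_contra! h
    exact hg0 (Subtype.ext (lp.ext (funext fun i => Subtype.ext (h i))))
  set V := removeLine W i₀ (g.1 i₀)
  have hV : ∀ i ∉ {i | V i ≠ ⊥}, V i = ⊥ := fun i hi => not_not.mp hi
  refine ⟨{i | V i ≠ ⊥}, V, fun i hi => ⟨removeLine_le i, hi, isClosed_removeLine hF.2.2.1 i⟩,
    ⟨_, _, (hF.removeLine_of_mem_synthesisKernel g.2 hi₀).subtype hV⟩, ?_⟩
  rw [refExcess_eq_lift_of_forall_ne hV i₀ fun i hi => inf_orthogonal_removeLine_of_ne hi,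
    inf_orthogonal_removeLine_self (g.1 i₀).2, ← Module.finrank_eq_rank,
    finrank_span_singleton hi₀, Nat.cast_one, Cardinal.lift_one]

theorem exists_refinement_excess_one {I : Type*} (w : I → ℝ) (hw : ∀ i, 0 < w i)
    (hwb : BddAbove (Set.range w)) (W : I → Submodule ℂ H)
    (hFS : IsFusionFrame w W) (hex : 0 < fusionExcess w W) :
    ∃ (Js : Set I) (V : I → Submodule ℂ H),
      (∀ i ∈ Js, V i ≤ W i ∧ V i ≠ ⊥ ∧ IsClosed (V i : Set H)) ∧
      IsFusionFrame (fun i : Js => w i.1) (fun i : Js => V i.1) ∧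
      refExcess W Js V = 1 :=
  exists_refinement_excess_one_general w W hFS hex

end
end
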